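/- Let Z ~ HRPar_a(α,Q,l) be a generalized Hüsler-Reiss Pareto random vector with density proportional to exp(-½ (log z)ᵀ D_α Q D_α (log z) + lᵀ D_α log z) ∏ z_i^{-1} on {z ≰ a}. Then for every β ∈ (0,∞)^d, the coordinatewise power Z^β = (Z_1^{β_1},…,Z_d^{β_d}) has distribution HRPar_{a^β}(α/β, Q, l), where α/β and a^β are coordinatewise, and the normalizing constants satisfy C_{a^β}(α/β,Q,l) = C_a(α,Q,l) ∏_{i=1}^d β_i. -/

import Mathlib

open MeasureTheory Matrix

/-- Unnormalized generalized Hüsler-Reiss Pareto density on `{z > 0 : z ≰ a}`,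
with tail-index vector `α` and `D_α` the diagonal matrix with diagonal `α`. -/
noncomputable def ghrDens {d : ℕ} (α : Fin d → ℝ) (Q : Matrix (Fin d) (Fin d) ℝ)
    (l a : Fin d → ℝ) (z : Fin d → ℝ) : ℝ :=
  if (∀ i, 0 < z i) ∧ ¬ ∀ i, z i ≤ a i then
    Real.exp (-(1 / 2) *
        ((fun i => Real.log (z i)) ⬝ᵥ
          (Matrix.diagonal α * Q * Matrix.diagonal α).mulVec fun i => Real.log (z i)) +
        l ⬝ᵥ (Matrix.diagonal α).mulVec fun i => Real.log (z i)) * ∏ i, (z i)⁻¹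
  else 0

/-- Generalized Hüsler-Reiss Pareto normalizing constant `C_a(α,Q,l)`. -/
noncomputable def ghrC {d : ℕ} (α : Fin d → ℝ) (Q : Matrix (Fin d) (Fin d) ℝ)
    (l a : Fin d → ℝ) : ℝ :=
  ∫ z, ghrDens α Q l a z

/-!
The power map `z ↦ z^β` is a diffeomorphism of the positive orthant with Jacobian
`∏ βᵢ zᵢ^(βᵢ-1)`, and it preserves the region `z ≰ a` once `a` is replaced by `a^β`.
Since `log zᵢ^βᵢ = βᵢ log zᵢ`, the vector `D_{α/β} log z^β` equals `D_α log z`, so the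
exponential factor of the density is unchanged, while the Jacobian turns `∏ (zᵢ^βᵢ)⁻¹` into
`∏ βᵢ · ∏ zᵢ⁻¹`. Both claims then follow from the change of variables formula.
-/

section ChangeOfVariables

variable {E F : Type*} [NormedAddCommGroup E] [NormedSpace ℝ E] [FiniteDimensional ℝ E]
  [MeasurableSpace E] [BorelSpace E] [NormedAddCommGroup F] [NormedSpace ℝ F]
  (μ : Measure E) [μ.IsAddHaarMeasure] {s : Set E} {f : E → E} {f' : E → E →L[ℝ] E}

theorem integral_eq_setIntegral_abs_det_fderiv_smul (hs : MeasurableSet s)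
    (hf' : ∀ x ∈ s, HasFDerivWithinAt f (f' x) s x) (hf : Set.InjOn f s) {g : E → F}
    (hg : Function.support g ⊆ f '' s) :
    ∫ y, g y ∂μ = ∫ x in s, |(f' x).det| • g (f x) ∂μ := by
  rw [← setIntegral_eq_integral_of_forall_compl_eq_zero (Function.support_subset_iff'.1 hg),
    integral_image_eq_integral_abs_det_fderiv_smul μ hs hf' hf]

theorem map_withDensity_eq_withDensity_of_abs_det_fderiv_mul (hs : MeasurableSet s)
    (hfm : Measurable f) (hf' : ∀ x ∈ s, HasFDerivWithinAt f (f' x) s x) (hf : Set.InjOn f s)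
    {g h : E → ENNReal} (hg : Function.support g ⊆ s) (hh : Function.support h ⊆ f '' s)
    (hgh : ∀ x ∈ s, ENNReal.ofReal |(f' x).det| * h (f x) = g x) :
    (μ.withDensity g).map f = μ.withDensity h := by
  ext A hA
  have hsA : MeasurableSet (s ∩ f ⁻¹' A) := hs.inter (hfm hA)
  rw [Measure.map_apply hfm hA, withDensity_apply _ (hfm hA), withDensity_apply _ hA,
    ← setLIntegral_eq_of_support_subset hg, Measure.restrict_restrict hs,
    ← setLIntegral_eq_of_support_subset hh,
    Measure.restrict_restrict (measurable_image_of_fderivWithin hs hf' hf),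
    ← Set.image_inter_preimage,
    lintegral_image_eq_lintegral_abs_det_fderiv_mul μ hsA
      (fun x hx => (hf' x hx.1).mono Set.inter_subset_left) (hf.mono Set.inter_subset_left)]
  exact setLIntegral_congr_fun hsA fun x hx => (hgh x hx.1).symm

end ChangeOfVariables

section PowerMap

variable {ι : Type*}

def posOrthant (ι : Type*) : Set (ι → ℝ) := Set.univ.pi fun _ => Set.Ioi 0

theorem mem_posOrthant {z : ι → ℝ} : z ∈ posOrthant ι ↔ ∀ i, 0 < z i := by
  simp [posOrthant]

theorem measurableSet_posOrthant [Countable ι] : MeasurableSet (posOrthant ι) :=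
  MeasurableSet.univ_pi fun _ => measurableSet_Ioi

noncomputable def piRpow (β z : ι → ℝ) : ι → ℝ := fun i => z i ^ β i

noncomputable def piRpowFDeriv [Fintype ι] (β z : ι → ℝ) : (ι → ℝ) →L[ℝ] (ι → ℝ) :=
  ContinuousLinearMap.pi fun i => (β i * z i ^ (β i - 1)) • ContinuousLinearMap.proj i

theorem measurable_piRpow (β : ι → ℝ) : Measurable (piRpow β) :=
  measurable_pi_lambda _ fun i => (measurable_pi_apply i).pow_const (β i)

theorem hasFDerivAt_piRpow [Fintype ι] (β : ι → ℝ) {z : ι → ℝ} (hz : z ∈ posOrthant ι) :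
    HasFDerivAt (piRpow β) (piRpowFDeriv β z) z :=
  hasFDerivAt_pi.2 fun i =>
    (hasFDerivAt_apply i z).rpow_const (Or.inl (mem_posOrthant.1 hz i).ne')

theorem det_piRpowFDeriv [Fintype ι] [DecidableEq ι] (β z : ι → ℝ) :
    (piRpowFDeriv β z).det = ∏ i, β i * z i ^ (β i - 1) := by
  have hmat : LinearMap.toMatrix' (piRpowFDeriv β z : (ι → ℝ) →ₗ[ℝ] (ι → ℝ)) =
      diagonal fun i => β i * z i ^ (β i - 1) := by
    ext i j
    by_cases h : i = j <;> simp [piRpowFDeriv, LinearMap.toMatrix'_apply, h]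
  rw [ContinuousLinearMap.det, ← LinearMap.det_toMatrix', hmat, det_diagonal]

theorem injOn_piRpow {β : ι → ℝ} (hβ : ∀ i, β i ≠ 0) : Set.InjOn (piRpow β) (posOrthant ι) := by
  intro z hz w hw h
  funext i
  rw [← Real.rpow_rpow_inv (mem_posOrthant.1 hz i).le (hβ i),
    ← Real.rpow_rpow_inv (mem_posOrthant.1 hw i).le (hβ i)]
  exact congrArg (· ^ (β i)⁻¹) (congrFun h i)

theorem piRpow_image_posOrthant {β : ι → ℝ} (hβ : ∀ i, β i ≠ 0) :
    piRpow β '' posOrthant ι = posOrthant ι := by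
  refine Set.Subset.antisymm ?_ fun w hw => ?_
  · rintro _ ⟨z, hz, rfl⟩
    exact mem_posOrthant.2 fun i => Real.rpow_pos_of_pos (mem_posOrthant.1 hz i) _
  · have hw' := mem_posOrthant.1 hw
    refine ⟨fun i => w i ^ (β i)⁻¹, mem_posOrthant.2 fun i => Real.rpow_pos_of_pos (hw' i) _, ?_⟩
    funext i
    exact Real.rpow_inv_rpow (hw' i).le (hβ i)

end PowerMap

theorem dotProduct_diagonal_mul_mulVec {ι R : Type*} [Fintype ι] [DecidableEq ι] [CommSemiring R]
    (α v : ι → R) (Q : Matrix ι ι R) :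
    v ⬝ᵥ (diagonal α * Q * diagonal α) *ᵥ v = (diagonal α *ᵥ v) ⬝ᵥ Q *ᵥ (diagonal α *ᵥ v) := by
  rw [← mulVec_mulVec, ← mulVec_mulVec, dotProduct_mulVec]
  congr 1
  funext i
  rw [vecMul_diagonal, mulVec_diagonal, mul_comm]

section GeneralizedHueslerReiss

variable {d : ℕ}

theorem support_ghrDens_subset (α : Fin d → ℝ) (Q : Matrix (Fin d) (Fin d) ℝ)
    (l a : Fin d → ℝ) : Function.support (ghrDens α Q l a) ⊆ posOrthant (Fin d) :=
  Function.support_subset_iff'.2 fun _ hz => if_neg fun h => hz (mem_posOrthant.2 h.1)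

theorem support_ofReal_mul_ghrDens_subset (c : ℝ) (α : Fin d → ℝ)
    (Q : Matrix (Fin d) (Fin d) ℝ) (l a : Fin d → ℝ) :
    Function.support (fun z => ENNReal.ofReal (c * ghrDens α Q l a z)) ⊆ posOrthant (Fin d) :=
  (Function.support_comp_subset ENNReal.ofReal_zero _).trans
    ((Function.support_mul_subset_right _ _).trans (support_ghrDens_subset α Q l a))

theorem diagonal_div_mulVec_log_piRpow {α β z : Fin d → ℝ} (hβ : ∀ i, β i ≠ 0)
    (hz : z ∈ posOrthant (Fin d)) :
    diagonal (fun i => α i / β i) *ᵥ (fun i => Real.log (piRpow β z i)) =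
      diagonal α *ᵥ fun i => Real.log (z i) := by
  funext i
  rw [mulVec_diagonal, mulVec_diagonal, piRpow, Real.log_rpow (mem_posOrthant.1 hz i)]
  field_simp [hβ i]

theorem ghrDens_piRpow_mul_prod (α β : Fin d → ℝ) (Q : Matrix (Fin d) (Fin d) ℝ)
    (l a : Fin d → ℝ) (hβ : ∀ i, 0 < β i) (ha : ∀ i, 0 < a i) {z : Fin d → ℝ}
    (hz : z ∈ posOrthant (Fin d)) :
    ghrDens (fun i => α i / β i) Q l (fun i => a i ^ β i) (piRpow β z) *
        ∏ i, β i * z i ^ (β i - 1) = (∏ i, β i) * ghrDens α Q l a z := by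
  have hz' := mem_posOrthant.1 hz
  have hpos : ∀ i, 0 < piRpow β z i := fun i => Real.rpow_pos_of_pos (hz' i) _
  have hle : (∀ i, piRpow β z i ≤ a i ^ β i) ↔ ∀ i, z i ≤ a i :=
    forall_congr' fun i => Real.rpow_le_rpow_iff (hz' i).le (ha i).le (hβ i)
  have hprod : (∏ i, (piRpow β z i)⁻¹) * ∏ i, β i * z i ^ (β i - 1) =
      (∏ i, β i) * ∏ i, (z i)⁻¹ := by
    rw [← Finset.prod_mul_distrib, ← Finset.prod_mul_distrib]
    refine Finset.prod_congr rfl fun i _ => ?_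
    have hzβ : z i ^ β i ≠ 0 := (hpos i).ne'
    rw [piRpow, Real.rpow_sub_one (hz' i).ne']
    field_simp
  by_cases h : ∀ i, z i ≤ a i
  · simp [ghrDens, h, hle.2 h]
  · simp only [ghrDens, hz', hpos, hle, h, implies_true, not_false_eq_true, and_self, if_true,
      dotProduct_diagonal_mul_mulVec, diagonal_div_mulVec_log_piRpow (fun i => (hβ i).ne') hz]
    rw [mul_assoc, hprod]
    ring

theorem abs_det_piRpowFDeriv_mul_ghrDens_piRpow (α β : Fin d → ℝ)
    (Q : Matrix (Fin d) (Fin d) ℝ) (l a : Fin d → ℝ) (hβ : ∀ i, 0 < β i) (ha : ∀ i, 0 < a i)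
    {z : Fin d → ℝ} (hz : z ∈ posOrthant (Fin d)) :
    |(piRpowFDeriv β z).det| *
        ghrDens (fun i => α i / β i) Q l (fun i => a i ^ β i) (piRpow β z) =
      (∏ i, β i) * ghrDens α Q l a z := by
  have hdet : 0 < ∏ i, β i * z i ^ (β i - 1) :=
    Finset.prod_pos fun i _ => mul_pos (hβ i) (Real.rpow_pos_of_pos (mem_posOrthant.1 hz i) _)
  rw [det_piRpowFDeriv, abs_of_pos hdet, mul_comm]
  exact ghrDens_piRpow_mul_prod α β Q l a hβ ha hz

end GeneralizedHueslerReiss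

theorem generalized_hr_pareto_power_transform_general
    {Ω : Type*} [MeasurableSpace Ω] (μ : Measure Ω)
    {d : ℕ}
    (α : Fin d → ℝ)
    (Q : Matrix (Fin d) (Fin d) ℝ) (l a : Fin d → ℝ)
    (ha : ∀ i, 0 < a i)
    (Z : Ω → Fin d → ℝ) (hZ : Measurable Z)
    (hdist : Measure.map Z μ = volume.withDensity fun z =>
      ENNReal.ofReal ((ghrC α Q l a)⁻¹ * ghrDens α Q l a z))
    (β : Fin d → ℝ) (hβ : ∀ i, 0 < β i) :
    (Measure.map (fun ω i => Z ω i ^ β i) μ =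
      volume.withDensity fun z => ENNReal.ofReal
        ((ghrC (fun i => α i / β i) Q l fun i => a i ^ β i)⁻¹ *
          ghrDens (fun i => α i / β i) Q l (fun i => a i ^ β i) z)) ∧
    ghrC (fun i => α i / β i) Q l (fun i => a i ^ β i) =
      ghrC α Q l a * ∏ i, β i := by
  have hβ₀ : ∀ i, β i ≠ 0 := fun i => (hβ i).ne'
  have hU := measurableSet_posOrthant (ι := Fin d)
  have hderiv : ∀ z ∈ posOrthant (Fin d),
      HasFDerivWithinAt (piRpow β) (piRpowFDeriv β z) (posOrthant (Fin d)) z :=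
    fun z hz => (hasFDerivAt_piRpow β hz).hasFDerivWithinAt
  have hC : ghrC (fun i => α i / β i) Q l (fun i => a i ^ β i) = ghrC α Q l a * ∏ i, β i := by
    rw [ghrC, integral_eq_setIntegral_abs_det_fderiv_smul volume hU hderiv (injOn_piRpow hβ₀)
        ((support_ghrDens_subset _ Q l _).trans (piRpow_image_posOrthant hβ₀).superset)]
    simp only [smul_eq_mul]
    rw [setIntegral_congr_fun hU fun z hz =>
        abs_det_piRpowFDeriv_mul_ghrDens_piRpow α β Q l a hβ ha hz,
      integral_const_mul, setIntegral_eq_integral_of_forall_compl_eq_zero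
        (Function.support_subset_iff'.1 (support_ghrDens_subset α Q l a)), ghrC, mul_comm]
  refine ⟨?_, hC⟩
  rw [show (fun ω i => Z ω i ^ β i) = piRpow β ∘ Z from rfl,
    ← Measure.map_map (measurable_piRpow β) hZ, hdist]
  refine map_withDensity_eq_withDensity_of_abs_det_fderiv_mul volume hU (measurable_piRpow β) hderiv
    (injOn_piRpow hβ₀) (support_ofReal_mul_ghrDens_subset _ _ Q l _)
    ((support_ofReal_mul_ghrDens_subset _ _ Q l _).trans (piRpow_image_posOrthant hβ₀).superset)
    fun z hz => ?_
  rw [← ENNReal.ofReal_mul (abs_nonneg _), mul_left_comm,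
    abs_det_piRpowFDeriv_mul_ghrDens_piRpow α β Q l a hβ ha hz, hC, mul_inv, mul_assoc,
    inv_mul_cancel_left₀ (Finset.prod_pos fun i _ => hβ i).ne']

/-- Power transformation of the generalized Hüsler-Reiss Pareto model: if
`Z ~ HRPar_a(α,Q,l)` and `β ∈ (0,∞)^d`, then `Z^β ~ HRPar_{a^β}(α/β, Q, l)` and
`C_{a^β}(α/β,Q,l) = C_a(α,Q,l) ∏ β_i`. -/
theorem generalized_hr_pareto_power_transform
    {Ω : Type*} [MeasurableSpace Ω] (μ : Measure Ω) [IsProbabilityMeasure μ]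
    {d : ℕ} (hd : 2 ≤ d)
    (α : Fin d → ℝ) (hα : ∀ i, 0 < α i)
    (Q : Matrix (Fin d) (Fin d) ℝ) (l a : Fin d → ℝ)
    (hQ : Q.PosSemidef)
    (hker : ∀ v : Fin d → ℝ, Q.mulVec v = 0 ↔ ∃ c : ℝ, v = fun _ => c)
    (hl : ∑ i, l i = -1) (ha : ∀ i, 0 < a i)
    (Z : Ω → Fin d → ℝ) (hZ : Measurable Z)
    (hdist : Measure.map Z μ = volume.withDensity fun z =>
      ENNReal.ofReal ((ghrC α Q l a)⁻¹ * ghrDens α Q l a z))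
    (β : Fin d → ℝ) (hβ : ∀ i, 0 < β i) :
    (Measure.map (fun ω i => Z ω i ^ β i) μ =
      volume.withDensity fun z => ENNReal.ofReal
        ((ghrC (fun i => α i / β i) Q l fun i => a i ^ β i)⁻¹ *
          ghrDens (fun i => α i / β i) Q l (fun i => a i ^ β i) z)) ∧
    ghrC (fun i => α i / β i) Q l (fun i => a i ^ β i) =
      ghrC α Q l a * ∏ i, β i :=
  generalized_hr_pareto_power_transform_general μ α Q l a ha Z hZ hdist β hβ
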